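/- (Euler's theorem on odd perfect numbers.) If n is an odd perfect number, then there exist a prime p, an odd positive integer r, and an odd positive integer m such that p ≡ 1 (mod 4), gcd(p, m) = 1, and n = p^r * m^2. -/

import Mathlib

theorem euler_odd_perfect_form (n : ℕ) (hodd : Odd n) (hperf : Nat.Perfect n) :
    ∃ p r m : ℕ, p.Prime ∧ Odd r ∧ 0 < r ∧ Odd m ∧ 0 < m ∧ p % 4 = 1 ∧
      Nat.gcd p m = 1 ∧ n = p ^ r * m ^ 2 := by
  have hn0 : 0 < n := hperf.2
  have hn : n ≠ 0 := hn0.ne'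
  have hn2 : ¬ (2 ∣ n) := by
    rcases hodd with ⟨k, hk⟩; omega
  have hσ : ∑ d ∈ n.divisors, d = 2 * n :=
    (Nat.perfect_iff_sum_divisors_eq_two_mul hn0).mp hperf
  set S : ℕ → ℕ := fun q => ∑ k ∈ Finset.range (n.factorization q + 1), q ^ k with hS
  have hprod : ∏ q ∈ n.primeFactors, S q = 2 * n := (Nat.sum_divisors hn).symm.trans hσ
  have hSpos : ∀ q ∈ n.primeFactors, 0 < S q := by
    intro q hq
    refine Finset.sum_pos (fun k _ => pow_pos (Nat.prime_of_mem_primeFactors hq).pos k) ?_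
    exact ⟨0, Finset.mem_range.mpr (Nat.succ_pos _)⟩
  have h1 : (∏ q ∈ n.primeFactors, S q).factorization
      = ∑ q ∈ n.primeFactors, (S q).factorization :=
    Nat.factorization_prod (fun q hq => (hSpos q hq).ne')
  rw [hprod] at h1
  have h2 : (2 * n).factorization 2 = 1 := by
    rw [Nat.factorization_mul two_ne_zero hn]
    simp [Nat.Prime.factorization Nat.prime_two,
      Nat.factorization_eq_zero_of_not_dvd hn2]
  have key : ∑ q ∈ n.primeFactors, (S q).factorization 2 = 1 := by
    rw [← Finsupp.finset_sum_apply, ← h1, h2]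
  obtain ⟨p, hp, hfp0⟩ : ∃ p ∈ n.primeFactors, (S p).factorization 2 ≠ 0 :=
    Finset.exists_ne_zero_of_sum_ne_zero (by rw [key]; exact one_ne_zero)
  have hsplit := Finset.add_sum_erase n.primeFactors (fun q => (S q).factorization 2) hp
  rw [key] at hsplit
  have hfp : (S p).factorization 2 = 1 := by omega
  have hrest : ∑ q ∈ n.primeFactors.erase p, (S q).factorization 2 = 0 := by omega
  have hqzero : ∀ q ∈ n.primeFactors.erase p, (S q).factorization 2 = 0 :=
    (Finset.sum_eq_zero_iff).mp hrest
  -- exponents of other primes are even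
  have heven : ∀ q ∈ n.primeFactors.erase p, Even (n.factorization q) := by
    intro q hq
    have hq' := Finset.mem_of_mem_erase hq
    have hqp := Nat.prime_of_mem_primeFactors hq'
    have hqodd : q % 2 = 1 := by
      have hqd := Nat.dvd_of_mem_primeFactors hq'
      have : q ≠ 2 := by rintro rfl; exact hn2 hqd
      have := hqp.two_le
      rcases Nat.mod_two_eq_zero_or_one q with h | h
      · exfalso
        have : 2 ∣ q := Nat.dvd_of_mod_eq_zero h
        rcases (Nat.prime_dvd_prime_iff_eq Nat.prime_two hqp).mp this with rfl
        exact hn2 hqd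
      · exact h
    have hSq0 : S q ≠ 0 := (hSpos q hq').ne'
    have hnot2 : ¬ (2 ∣ S q) := by
      intro hdvd
      have := (Nat.Prime.dvd_iff_one_le_factorization Nat.prime_two hSq0).mp hdvd
      rw [hqzero q hq] at this; omega
    have hcast : (S q : ZMod 2) = ((n.factorization q + 1 : ℕ) : ZMod 2) := by
      have hq1 : (q : ZMod 2) = 1 := by
        have := ZMod.natCast_mod q 2
        rw [hqodd] at this; rw [← this]; rfl
      rw [hS]
      push_cast
      rw [hq1]
      simp
    by_contra hodd'
    have hodd2 : 2 ∣ n.factorization q + 1 := by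
      rcases Nat.even_or_odd (n.factorization q) with h | h
      · exact absurd h hodd'
      · rcases h with ⟨k, hk⟩; omega
    apply hnot2
    rw [← ZMod.natCast_eq_zero_iff, hcast,
      ZMod.natCast_eq_zero_iff]
    exact hodd2
  -- analyze p
  have hpp : p.Prime := Nat.prime_of_mem_primeFactors hp
  have hpd : p ∣ n := Nat.dvd_of_mem_primeFactors hp
  have hpodd : p % 2 = 1 := by
    have : p ≠ 2 := by rintro rfl; exact hn2 hpd
    have := hpp.two_le
    rcases Nat.mod_two_eq_zero_or_one p with h | h
    · exfalso
      rcases (Nat.prime_dvd_prime_iff_eq Nat.prime_two hpp).mp (Nat.dvd_of_mod_eq_zero h) with rfl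
      exact hn2 hpd
    · exact h
  have hSp0 : S p ≠ 0 := (hSpos p hp).ne'
  have h2Sp : 2 ∣ S p :=
    (Nat.Prime.dvd_iff_one_le_factorization Nat.prime_two hSp0).mpr (by omega)
  have h4Sp : ¬ (4 ∣ S p) := by
    intro h4
    have : (2 : ℕ) ^ 2 ∣ S p := by norm_num; exact h4
    have := (Nat.Prime.pow_dvd_iff_le_factorization Nat.prime_two hSp0).mp this
    omega
  have hSp4 : S p % 4 = 2 := by omega
  have hc : (S p : ZMod 4) = 2 := by
    have := ZMod.natCast_mod (S p) 4
    rw [hSp4] at this; rw [← this]; rfl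
  have hgeom : (S p : ZMod 4) = ∑ k ∈ Finset.range (n.factorization p + 1), (p : ZMod 4) ^ k := by
    rw [hS]; push_cast; rfl
  have hp4 : p % 4 = 1 ∧ n.factorization p % 4 = 1 := by
    rcases (by omega : p % 4 = 1 ∨ p % 4 = 3) with h | h
    · have hp1 : (p : ZMod 4) = 1 := by
        have := ZMod.natCast_mod p 4
        rw [h] at this; rw [← this]; rfl
      rw [hp1] at hgeom
      simp only [one_pow, Finset.sum_const, Finset.card_range, nsmul_eq_mul, mul_one] at hgeom
      rw [hc] at hgeom
      have : ((n.factorization p + 1 : ℕ) : ZMod 4) = ((2 : ℕ) : ZMod 4) := by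
        rw [← hgeom]; norm_num
      have := (ZMod.natCast_eq_natCast_iff' _ _ _).mp this
      constructor
      · exact h
      · omega
    · exfalso
      have hp3 : (p : ZMod 4) = -1 := by
        have := ZMod.natCast_mod p 4
        rw [h] at this; rw [← this]; decide
      rw [hp3, neg_one_geom_sum] at hgeom
      rw [hc] at hgeom
      split at hgeom <;> simp_all <;> exact absurd hgeom (by decide)
  have hroddpos : Odd (n.factorization p) ∧ 0 < n.factorization p :=
    ⟨Nat.odd_iff.mpr (by omega), by omega⟩
  -- construct m
  set m := ∏ q ∈ n.primeFactors.erase p, q ^ (n.factorization q / 2) with hm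
  have hm2 : m ^ 2 = ∏ q ∈ n.primeFactors.erase p, q ^ (n.factorization q) := by
    rw [hm, ← Finset.prod_pow]
    refine Finset.prod_congr rfl (fun q hq => ?_)
    rw [← pow_mul]
    congr 1
    rcases heven q hq with ⟨k, hk⟩
    omega
  have hn_eq : n = p ^ n.factorization p * m ^ 2 := by
    rw [hm2, Finset.mul_prod_erase n.primeFactors (fun q => q ^ n.factorization q) hp]
    conv_lhs => rw [← Nat.factorization_prod_pow_eq_self hn]
    rw [Finsupp.prod, Nat.support_factorization]
  have hmpos : 0 < m := by
    rcases Nat.eq_zero_or_pos m with h | h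
    · exfalso; rw [h] at hn_eq; simp at hn_eq; omega
    · exact h
  have hm2dvd : m ^ 2 ∣ n := by
    conv_rhs => rw [hn_eq]
    exact Dvd.intro_left _ rfl
  have hmdvd : m ∣ n := dvd_trans (dvd_pow_self m two_ne_zero) hm2dvd
  have hmodd : Odd m := by
    rcases Nat.even_or_odd m with h | h
    · exfalso; exact hn2 (dvd_trans h.two_dvd hmdvd)
    · exact h
  have hcop : Nat.gcd p m = 1 := by
    have : ¬ p ∣ m := by
      intro hdvd
      rw [hm] at hdvd
      obtain ⟨q, hq, hpq⟩ := hpp.prime.exists_mem_finset_dvd hdvd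
      have hq' := Finset.mem_of_mem_erase hq
      have hqp := Nat.prime_of_mem_primeFactors hq'
      have : p ∣ q := hpp.dvd_of_dvd_pow hpq
      have := (Nat.prime_dvd_prime_iff_eq hpp hqp).mp this
      exact (Finset.ne_of_mem_erase hq).symm this
    exact (Nat.Prime.coprime_iff_not_dvd hpp).mpr this
  exact ⟨p, n.factorization p, m, hpp, hroddpos.1, hroddpos.2, hmodd, hmpos, hp4.1, hcop, hn_eq⟩
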